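/- Soundness of specialisation constraints: if a hypothesis H is incomplete with respect to positive examples E⁺ and background knowledge B (i.e., there exists e⁺ ∈ E⁺ with B ∪ H ⊭ e⁺), then no specialisation H′ of H (i.e., no clausal theory H′ with H ⪯ H′) is a solution, where a solution is a hypothesis that is complete (∀e ∈ E⁺, B ∪ H′ ⊨ e) and consistent (∀e ∈ E⁻, B ∪ H′ ⊭ e). -/

import Mathlib

open FirstOrder FirstOrder.Language

/-- A literal: a signed (positive or negative) atomic `L`-formula, given by a relation
symbol applied to terms with free variables in `V`. -/
structure Lit (L : Language) (V : Type*) where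
  pos : Bool
  n : ℕ
  rel : L.Relations n
  args : Fin n → L.Term V

noncomputable instance {L : Language} {V : Type*} : DecidableEq (Lit L V) :=
  Classical.decEq _

/-- Apply a substitution `θ` (a map from variables to `L`-terms) to a literal. -/
def Lit.subst {L : Language} {V : Type*} (l : Lit L V) (θ : V → L.Term V) : Lit L V :=
  ⟨l.pos, l.n, l.rel, fun i => (l.args i).subst θ⟩

/-- Realization (truth) of a literal in structure `M` under valuation `v`. -/
def Lit.Realize {L : Language} {V : Type*} (M : Type*) [L.Structure M]
    (l : Lit L V) (v : V → M) : Prop :=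
  if l.pos then Structure.RelMap l.rel (fun i => (l.args i).realize v)
  else ¬ Structure.RelMap l.rel (fun i => (l.args i).realize v)

/-- A clause: a finite set of literals. -/
abbrev Clause (L : Language) (V : Type*) := Finset (Lit L V)

/-- Clause `C₁` subsumes clause `C₂` iff there is a substitution `θ` with `C₁θ ⊆ C₂`. -/
def Clause.Subsumes {L : Language} {V : Type*} (C₁ C₂ : Clause L V) : Prop :=
  ∃ θ : V → L.Term V, ∀ l ∈ C₁, l.subst θ ∈ C₂

/-- Semantics of a clause: the universal closure of the disjunction of its literals. -/
def Clause.Realize {L : Language} {V : Type*} (M : Type*) [L.Structure M]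
    (C : Clause L V) : Prop :=
  ∀ v : V → M, ∃ l ∈ C, l.Realize M v

/-- Theory subsumption `T₁ ⪯ T₂`: every clause of `T₂` is subsumed by some clause of `T₁`. -/
def TheorySubsumes {L : Language} {V : Type*} (T₁ T₂ : Finset (Clause L V)) : Prop :=
  ∀ C₂ ∈ T₂, ∃ C₁ ∈ T₁, Clause.Subsumes C₁ C₂

/-- `M` is a model of a set of clauses `S`. -/
def Models {L : Language} {V : Type*} (M : Type*) [L.Structure M]
    (S : Set (Clause L V)) : Prop :=
  ∀ C ∈ S, Clause.Realize M C

/-- A ground atom: a relation symbol applied to variable-free terms. -/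
structure GAtom (L : Language) where
  n : ℕ
  rel : L.Relations n
  args : Fin n → L.Term Empty

/-- Truth of a ground atom in a structure. -/
def GAtom.Realize {L : Language} (M : Type*) [L.Structure M] (e : GAtom L) : Prop :=
  Structure.RelMap e.rel fun i => (e.args i).realize (Empty.elim : Empty → M)

/-- A set of clauses `S` entails a ground atom `e`: every model of `S` satisfies `e`. -/
def Entails {L : Language} {V : Type*} (S : Set (Clause L V)) (e : GAtom L) : Prop :=
  ∀ (M : Type*) [L.Structure M], Models M S → GAtom.Realize M e

/-- `P` is a sub-program of `Q` (programs are finite multisets of clauses). -/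
inductive SubProgram {L : Language} {V : Type*} :
    Multiset (Clause L V) → Multiset (Clause L V) → Prop
  | empty (Q : Multiset (Clause L V)) : SubProgram 0 Q
  | step {P Q : Multiset (Clause L V)} {Cp Cq : Clause L V} :
      Cp ∈ P → Cq ∈ Q → Cp ⊆ Cq →
      SubProgram (P.erase Cp) (Q.erase Cq) → SubProgram P Q

/-- A set of clauses `S` entails a sentence `e`: every model of `S` satisfies `e`. -/
def EntailsSentence {L : Language} {V : Type*} (S : Set (Clause L V))
    (e : L.Sentence) : Prop :=
  ∀ (M : Type*) [L.Structure M], Models M S → M ⊨ e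

/-!
A substitution instance of a clause holds in every model of the clause, because `Cθ` under a
valuation `v` says what `C` says under `x ↦ ⟦θ x⟧ᵥ`. Hence every model of `B ∪ H` is a model of `B ∪ H'`
whenever `H ⪯ H'`, so specialising can only lose consequences: an example that `B ∪ H` fails to
entail is not entailed by `B ∪ H'` either, and `H'` is incomplete.
-/

section Specialisation

variable {L : Language} {V : Type*} {M : Type*} [L.Structure M]

theorem Lit.realize_subst (l : Lit L V) (θ : V → L.Term V) (v : V → M) :
    (l.subst θ).Realize M v ↔ l.Realize M (fun x => (θ x).realize v) := by
  simp only [Lit.Realize, Lit.subst, Term.realize_subst]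

theorem Clause.Realize.of_subsumes {C₁ C₂ : Clause L V} (hsub : C₁.Subsumes C₂)
    (h : C₁.Realize M) : C₂.Realize M := by
  obtain ⟨θ, hθ⟩ := hsub
  intro v
  obtain ⟨l, hl, hlv⟩ := h fun x => (θ x).realize v
  exact ⟨l.subst θ, hθ l hl, (l.realize_subst θ v).2 hlv⟩

theorem Models.union_of_theorySubsumes {S : Set (Clause L V)} {T₁ T₂ : Finset (Clause L V)}
    (hsub : TheorySubsumes T₁ T₂) (h : Models M (S ∪ ↑T₁)) : Models M (S ∪ ↑T₂) := by
  rintro C (hS | hT₂)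
  · exact h C (Or.inl hS)
  · obtain ⟨C₁, hC₁, hC₁C⟩ := hsub C hT₂
    exact (h C₁ (Or.inr hC₁)).of_subsumes hC₁C

theorem Entails.of_theorySubsumes {S : Set (Clause L V)} {T₁ T₂ : Finset (Clause L V)}
    {e : GAtom L} (hsub : TheorySubsumes T₁ T₂) (h : Entails (S ∪ ↑T₂) e) :
    Entails (S ∪ ↑T₁) e :=
  fun M _ hM => h M (hM.union_of_theorySubsumes hsub)

end Specialisation

/-- Soundness of specialisation constraints: if `H` is incomplete
(some `e⁺ ∈ E⁺` has `B ∪ H ⊭ e⁺`), then no specialisation `H'` of `H` is a solution. -/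
theorem specialisation_constraint_sound {L : Language} {V : Type*}
    (B : Set (Clause L V)) (Epos Eneg : Set (GAtom L)) (H : Finset (Clause L V))
    (hincomplete : ∃ e ∈ Epos, ¬ Entails (B ∪ ↑H) e) :
    ∀ H' : Finset (Clause L V), TheorySubsumes H H' →
      ¬ ((∀ e ∈ Epos, Entails (B ∪ ↑H') e) ∧ (∀ e ∈ Eneg, ¬ Entails (B ∪ ↑H') e)) := by
  rintro H' hsub ⟨hcomplete, -⟩
  obtain ⟨e, he, hne⟩ := hincomplete
  exact hne ((hcomplete e he).of_theorySubsumes hsub)
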